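/- arXiv:2407.14547 — 2 statements merged into one kernel-verified Lean document; each statement's English description precedes it below -/
import Mathlib

section
/- The function x ↦ (E(x) - (1-x)·K(x))/x is strictly increasing on (0,1), with limit π/4 as x → 0⁺ and limit 1 as x → 1⁻. -/
/-!
Pointwise, `(1 - x sin²t)^(1/2) - (1 - x) (1 - x sin²t)^(-1/2) = x cos²t / √(1 - x sin²t)`, so for
`0 < x < 1` the function is Legendre's `B(x) = ∫₀^{π/2} cos²t / √(1 - x sin²t) dt`, whose integrand
increases strictly with `x`. For `x ≤ 1` that integrand is bounded by `|cos t|`, since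
`√(1 - x sin²t) ≥ √(cos²t)`; dominated convergence then makes `B` continuous up to `x = 1`, and the
limits are `B(0) = ∫ cos² = π/4` and `B(1) = ∫ cos = 1`.
-/

open Real Set Filter

noncomputable def K (x : ℝ) : ℝ :=
  ∫ t in (0 : ℝ)..(π / 2), (1 - x * Real.sin t ^ 2) ^ (-(1/2) : ℝ)

noncomputable def E (x : ℝ) : ℝ :=
  ∫ t in (0 : ℝ)..(π / 2), (1 - x * Real.sin t ^ 2) ^ ((1/2) : ℝ)

open MeasureTheory

lemma one_sub_mul_sin_sq_pos {x : ℝ} (hx : x < 1) (t : ℝ) : 0 < 1 - x * sin t ^ 2 := by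
  rcases le_or_gt x 0 with h | h
  · nlinarith [sq_nonneg (sin t)]
  · nlinarith [sin_sq_le_one t]

noncomputable def ellipticB (x : ℝ) : ℝ :=
  ∫ t in (0 : ℝ)..(π / 2), cos t ^ 2 / √(1 - x * sin t ^ 2)

lemma continuous_ellipticB_integrand {x : ℝ} (hx : x < 1) :
    Continuous fun t ↦ cos t ^ 2 / √(1 - x * sin t ^ 2) :=
  Continuous.div (by fun_prop) (by fun_prop) fun t ↦
    (sqrt_pos.2 (one_sub_mul_sin_sq_pos hx t)).ne'

theorem E_sub_one_sub_mul_K {x : ℝ} (hx : x < 1) :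
    E x - (1 - x) * K x = x * ellipticB x := by
  have hpos := one_sub_mul_sin_sq_pos hx
  have hcont : Continuous fun t ↦ 1 - x * sin t ^ 2 := by fun_prop
  have hE : IntervalIntegrable (fun t ↦ (1 - x * sin t ^ 2) ^ ((1 / 2) : ℝ)) volume 0 (π / 2) :=
    (hcont.rpow_const fun _ ↦ Or.inr (by norm_num)).intervalIntegrable _ _
  have hK : IntervalIntegrable (fun t ↦ (1 - x * sin t ^ 2) ^ (-(1 / 2) : ℝ)) volume 0 (π / 2) :=
    (hcont.rpow_const fun t ↦ Or.inl (hpos t).ne').intervalIntegrable _ _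
  rw [E, K, ellipticB, ← intervalIntegral.integral_const_mul,
    ← intervalIntegral.integral_sub hE (hK.const_mul _), ← intervalIntegral.integral_const_mul]
  congr 1 with t
  have hsq := sq_sqrt (hpos t).le
  have hne := (sqrt_pos.2 (hpos t)).ne'
  rw [rpow_neg (hpos t).le, ← sqrt_eq_rpow, cos_sq' t]
  field_simp
  linear_combination hsq

lemma ellipticB_integrand_le {x y : ℝ} (hxy : x ≤ y) (hy : y < 1) (t : ℝ) :
    cos t ^ 2 / √(1 - x * sin t ^ 2) ≤ cos t ^ 2 / √(1 - y * sin t ^ 2) := by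
  have := one_sub_mul_sin_sq_pos hy t
  gcongr

lemma ellipticB_integrand_lt {x y : ℝ} (hxy : x < y) (hy : y < 1) {t : ℝ} (hs : sin t ≠ 0)
    (hc : cos t ≠ 0) :
    cos t ^ 2 / √(1 - x * sin t ^ 2) < cos t ^ 2 / √(1 - y * sin t ^ 2) := by
  have := one_sub_mul_sin_sq_pos hy t
  gcongr

theorem strictMonoOn_ellipticB : StrictMonoOn ellipticB (Iio 1) := by
  intro x hx y hy hxy
  refine intervalIntegral.integral_lt_integral_of_continuousOn_of_le_of_exists_lt
    (by positivity) (continuous_ellipticB_integrand hx).continuousOn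
    (continuous_ellipticB_integrand hy).continuousOn
    (fun t _ ↦ ellipticB_integrand_le hxy.le hy t) ⟨π / 4, ⟨by positivity, by linarith [pi_pos]⟩, ?_⟩
  refine ellipticB_integrand_lt hxy hy ?_ ?_
  · rw [sin_pi_div_four]; positivity
  · rw [cos_pi_div_four]; positivity

lemma abs_cos_le_sqrt_one_sub_mul_sin_sq {x : ℝ} (hx : x ≤ 1) (t : ℝ) :
    |cos t| ≤ √(1 - x * sin t ^ 2) := by
  rw [← sqrt_sq_eq_abs, cos_sq']
  gcongr
  nlinarith [sq_nonneg (sin t)]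

lemma abs_ellipticB_integrand_le {x : ℝ} (hx : x ≤ 1) (t : ℝ) :
    |cos t ^ 2 / √(1 - x * sin t ^ 2)| ≤ |cos t| := by
  rcases eq_or_ne (cos t) 0 with hc | hc
  · simp [hc]
  have hle := abs_cos_le_sqrt_one_sub_mul_sin_sq hx t
  have hpos : 0 < |cos t| := abs_pos.2 hc
  rw [abs_div, abs_of_nonneg (sq_nonneg _), abs_of_nonneg (sqrt_nonneg _), ← sq_abs,
    div_le_iff₀ (hpos.trans_le hle), sq]
  gcongr

lemma continuousOn_ellipticB_integrand_param (t : ℝ) :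
    ContinuousOn (fun x ↦ cos t ^ 2 / √(1 - x * sin t ^ 2)) (Iic 1) := by
  rcases eq_or_ne (cos t) 0 with hc | hc
  · simpa [hc] using continuousOn_const
  exact continuousOn_const.div (by fun_prop) fun x hx ↦
    ((abs_pos.2 hc).trans_le (abs_cos_le_sqrt_one_sub_mul_sin_sq hx t)).ne'

theorem continuousOn_ellipticB : ContinuousOn ellipticB (Iic 1) := by
  intro x₀ _
  refine intervalIntegral.continuousWithinAt_of_dominated_interval (bound := fun _ ↦ 1)
    (eventually_nhdsWithin_of_forall fun x _ ↦ ?_)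
    (eventually_nhdsWithin_of_forall fun x hx ↦ Eventually.of_forall fun t _ ↦ ?_)
    intervalIntegrable_const
    (Eventually.of_forall fun t _ ↦ continuousOn_ellipticB_integrand_param t x₀ ‹_›)
  · exact (by fun_prop : Measurable fun t ↦ cos t ^ 2 / √(1 - x * sin t ^ 2)).aestronglyMeasurable
  · exact (abs_ellipticB_integrand_le hx t).trans (abs_cos_le_one t)

theorem ellipticB_zero : ellipticB 0 = π / 4 := by
  simp [ellipticB, integral_cos_sq]
  ring

theorem ellipticB_one : ellipticB 1 = 1 := by
  have : EqOn (fun t ↦ cos t ^ 2 / √(1 - 1 * sin t ^ 2)) cos (uIcc 0 (π / 2)) := by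
    intro t ht
    rw [uIcc_of_le (by positivity)] at ht
    have hc : 0 ≤ cos t := cos_nonneg_of_mem_Icc ⟨by linarith [ht.1, pi_pos], ht.2⟩
    simp only [one_mul, ← cos_sq', sqrt_sq hc]
    rcases hc.eq_or_lt with h | h
    · simp [← h]
    · field_simp
  rw [ellipticB, intervalIntegral.integral_congr this, integral_cos]
  simp

theorem stmt0 :
    StrictMonoOn (fun x : ℝ => (E x - (1 - x) * K x) / x) (Ioo 0 1) ∧
    Tendsto (fun x : ℝ => (E x - (1 - x) * K x) / x) (nhdsWithin 0 (Ioo 0 1)) (nhds (π / 4)) ∧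
    Tendsto (fun x : ℝ => (E x - (1 - x) * K x) / x) (nhdsWithin 1 (Ioo 0 1)) (nhds 1) := by
  have heq : EqOn ellipticB (fun x ↦ (E x - (1 - x) * K x) / x) (Ioo 0 1) := fun x hx ↦ by
    dsimp only
    rw [E_sub_one_sub_mul_K hx.2, mul_div_cancel_left₀ _ hx.1.ne']
  have hlim : ∀ a ∈ Iic (1 : ℝ), Tendsto (fun x ↦ (E x - (1 - x) * K x) / x)
      (nhdsWithin a (Ioo 0 1)) (nhds (ellipticB a)) := fun a ha ↦
    tendsto_nhdsWithin_congr heq ((continuousOn_ellipticB a ha).mono fun x hx ↦ hx.2.le)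
  refine ⟨(strictMonoOn_ellipticB.mono Ioo_subset_Iio_self).congr heq, ?_, ?_⟩
  · simpa [ellipticB_zero] using hlim 0 (by simp)
  · simpa [ellipticB_one] using hlim 1 (by simp)
end

section
/- The function x ↦ (E(x)² - (1-x)·K(x)²)/x² is strictly increasing on (0,1), with limit π²/32 as x → 0⁺ and limit 1 as x → 1⁻. -/
open Real Set Filter

open Topology MeasureTheory

/-!
Expanding the integrands by the binomial series and integrating termwise against Wallis' integrals
gives `K = π/2 · k` and `E = π/2 · e` for power series `k = ∑ kₙ xⁿ`, `e = ∑ eₙ xⁿ` with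
`kₙ = wₙ²`, `eₙ (1 - 2n) = kₙ` and `wₙ = (2n-1)!!/(2n)!!`. Comparing coefficients gives
`2x e' = e - k` and `2x(1-x) k' = e - (1-x) k`, whence `x (e² - (1-x) k²)' = (k - e)²`. The
coefficients of `k - e` are nonnegative and vanish at `n = 0`, so the primitive `m` of `(k - e)²/x`
with `m 0 = 0` is a power series with nonnegative coefficients starting at `x²`, and
`E² - (1-x) K² = (π/2)² m`. Hence the ratio is a power series with nonnegative coefficients and a
positive coefficient of `x`: it is strictly increasing and tends to its constant term `π²/32` at
`0`. At `1`, `E` is continuous with `E 1 = 1`, and `√(1-x) K(x) → 0` by dominated convergence.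
-/

section PowerSeries

variable {A : ℕ → ℝ} {C x : ℝ}

theorem summable_mul_pow_of_abs_le (hA : ∀ n, |A n| ≤ C * (n + 1)) (hx : |x| < 1) :
    Summable fun n => A n * x ^ n := by
  have hx' : ‖|x|‖ < 1 := by rwa [norm_abs_eq_norm]
  have hgeom : Summable fun n : ℕ => C * ((n : ℝ) + 1) * |x| ^ n := by
    simpa [add_mul, mul_add, mul_assoc] using
      ((summable_pow_mul_geometric_of_norm_lt_one 1 hx').add
        (summable_geometric_of_lt_one (abs_nonneg x) hx)).mul_left C
  refine .of_norm_bounded hgeom fun n => ?_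
  rw [norm_mul, norm_pow, Real.norm_eq_abs, Real.norm_eq_abs]
  gcongr
  exact hA n

theorem summable_mul_pow_of_abs_le_const (hA : ∀ n, |A n| ≤ C) (hx : |x| < 1) :
    Summable fun n => A n * x ^ n :=
  summable_mul_pow_of_abs_le (fun n => (hA n).trans
    (le_mul_of_one_le_right ((abs_nonneg _).trans (hA n)) (le_add_of_nonneg_left n.cast_nonneg)))
    hx

theorem summable_natCast_mul_mul_pow_of_abs_le_const (hA : ∀ n, |A n| ≤ C) (hx : |x| < 1) :
    Summable fun n => n * A n * x ^ n := by
  refine summable_mul_pow_of_abs_le (C := C) (fun n => ?_) hx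
  rw [abs_mul, Nat.abs_cast, mul_comm C]
  nlinarith [n.cast_nonneg (α := ℝ), abs_nonneg (A n), (abs_nonneg _).trans (hA n), hA n]

theorem tsum_mul_pow_eq_add_mul_tsum (hs : Summable fun n => A n * x ^ n) :
    ∑' n, A n * x ^ n = A 0 + x * ∑' n, A (n + 1) * x ^ n := by
  rw [hs.tsum_eq_zero_add, ← tsum_mul_left]
  simp only [pow_zero, mul_one, pow_succ]
  congr 1
  exact tsum_congr fun n => by ring

theorem hasDerivAt_tsum_mul_pow (hA : ∀ n, |A n| ≤ C) (hx : |x| < 1) :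
    HasDerivAt (fun y => ∑' n, A n * y ^ n) (∑' n, (n + 1) * A (n + 1) * x ^ n) x := by
  obtain ⟨r, hxr, hr1⟩ := exists_between hx
  have hr0 : 0 < r := (abs_nonneg x).trans_lt hxr
  have hr1' : ‖r‖ < 1 := by rwa [Real.norm_of_nonneg hr0.le]
  have hx_mem : x ∈ Metric.ball 0 r := by rwa [mem_ball_zero_iff, Real.norm_eq_abs]
  have hu : Summable fun n : ℕ => C * ((n : ℝ) + 1) * r ^ n / r := by
    refine (((summable_pow_mul_geometric_of_norm_lt_one 1 hr1').add
      (summable_geometric_of_lt_one hr0.le hr1)).mul_left (C / r)).congr fun n => ?_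
    field_simp
  have hbound : ∀ n (y : ℝ), y ∈ Metric.ball 0 r →
      ‖A n * (n * y ^ (n - 1))‖ ≤ C * ((n : ℝ) + 1) * r ^ n / r := by
    intro n y hy
    rw [mem_ball_zero_iff, Real.norm_eq_abs] at hy
    have hpow : (n : ℝ) * |y| ^ (n - 1) ≤ (n + 1) * r ^ n / r := by
      rcases n with _ | n
      · simp only [CharP.cast_eq_zero, zero_mul, zero_add, pow_zero, one_mul]
        positivity
      · rw [Nat.add_sub_cancel, pow_succ, mul_div_assoc, mul_div_cancel_right₀ _ hr0.ne']
        gcongr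
        linarith
    rw [norm_mul, norm_mul, norm_pow, Real.norm_eq_abs, Real.norm_eq_abs, Real.norm_eq_abs,
      Nat.abs_cast]
    calc |A n| * (n * |y| ^ (n - 1)) ≤ C * ((n + 1) * r ^ n / r) := by
          gcongr
          exacts [(abs_nonneg _).trans (hA n), hA n]
    _ = C * ((n : ℝ) + 1) * r ^ n / r := by ring
  have hderiv := hasDerivAt_tsum_of_isPreconnected hu Metric.isOpen_ball
    (convex_ball 0 r).isPreconnected (g := fun n y => A n * y ^ n)
    (fun n y _ => (hasDerivAt_pow n y).const_mul (A n)) hbound hx_mem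
    (summable_mul_pow_of_abs_le_const hA hx) hx_mem
  refine hderiv.congr_deriv ?_
  rw [(Summable.of_norm_bounded hu fun n => hbound n x hx_mem).tsum_eq_zero_add]
  simp only [CharP.cast_eq_zero, zero_mul, mul_zero, zero_add, Nat.cast_add, Nat.cast_one,
    Nat.add_sub_cancel]
  exact tsum_congr fun n => by ring

theorem mul_tsum_succ_mul_pow (hs : Summable fun n => n * A n * x ^ n) :
    x * ∑' n, (n + 1) * A (n + 1) * x ^ n = ∑' n, n * A n * x ^ n := by
  rw [tsum_mul_pow_eq_add_mul_tsum (A := fun n => n * A n) hs]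
  push_cast
  ring

theorem one_sub_mul_tsum_mul_pow (hA : ∀ n, |A n| ≤ C * (n + 1)) (hx : |x| < 1) :
    (1 - x) * ∑' n, A n * x ^ n = A 0 + x * ∑' n, (A (n + 1) - A n) * x ^ n := by
  have hA' (n : ℕ) : |A (n + 1)| ≤ 2 * C * (n + 1) := by
    have h := hA (n + 1)
    have hC : 0 ≤ C := by simpa using (abs_nonneg _).trans (hA 0)
    push_cast at h
    nlinarith
  have hs := summable_mul_pow_of_abs_le hA hx
  have hs' := summable_mul_pow_of_abs_le hA' hx
  simp only [sub_mul]
  rw [hs'.tsum_sub hs, one_mul]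
  nth_rw 1 [tsum_mul_pow_eq_add_mul_tsum hs]
  ring

theorem tsum_mul_zero_pow : ∑' n, A n * 0 ^ n = A 0 := by
  rw [tsum_eq_single 0 fun n hn => by simp [hn]]
  simp

theorem strictMonoOn_tsum_mul_pow (hA : ∀ n, |A n| ≤ C) (hA0 : ∀ n, 0 ≤ A n) {i : ℕ}
    (hi : i ≠ 0) (hAi : 0 < A i) : StrictMonoOn (fun x => ∑' n, A n * x ^ n) (Ico 0 1) := by
  intro x hx y hy hxy
  have hy' : |y| < 1 := by rw [abs_of_nonneg hy.1]; exact hy.2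
  refine Summable.tsum_lt_tsum_of_nonneg (i := i) (fun n => mul_nonneg (hA0 n) (pow_nonneg hx.1 n))
    (fun n => ?_) ?_ (summable_mul_pow_of_abs_le_const hA hy')
  · exact mul_le_mul_of_nonneg_left (pow_le_pow_left₀ hx.1 hxy.le n) (hA0 n)
  · exact mul_lt_mul_of_pos_left (pow_lt_pow_left₀ hxy hx.1 hi) hAi

theorem tendsto_tsum_mul_pow_nhds_zero (hA : ∀ n, |A n| ≤ C) :
    Tendsto (fun x => ∑' n, A n * x ^ n) (𝓝 0) (𝓝 (A 0)) := by
  have h := (hasDerivAt_tsum_mul_pow hA (x := 0) (by norm_num)).continuousAt.tendsto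
  rwa [tsum_mul_zero_pow] at h

end PowerSeries

noncomputable def oneSubRpowCoeff (a : ℝ) (n : ℕ) : ℝ := (-1) ^ n * Ring.choose a n

@[simp]
theorem oneSubRpowCoeff_zero (a : ℝ) : oneSubRpowCoeff a 0 = 1 := by
  simp [oneSubRpowCoeff]

theorem oneSubRpowCoeff_succ_mul (a : ℝ) (n : ℕ) :
    oneSubRpowCoeff a (n + 1) * (n + 1) = oneSubRpowCoeff a n * (n - a) := by
  have hsmeval (m : ℕ) : (descPochhammer ℤ m).smeval a = (descPochhammer ℝ m).eval a := by
    rw [← Polynomial.aeval_eq_smeval, Polynomial.aeval_def, Polynomial.eval₂_eq_eval_map,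
      descPochhammer_map]
  simp only [oneSubRpowCoeff, Ring.choose_eq_smul, smul_eq_mul, hsmeval,
    descPochhammer_succ_eval, Nat.factorial_succ, pow_succ]
  push_cast
  field_simp
  ring

theorem hasSum_oneSubRpowCoeff_mul_pow (a : ℝ) {u : ℝ} (hu : |u| < 1) :
    HasSum (fun n => oneSubRpowCoeff a n * u ^ n) ((1 - u) ^ a) := by
  have hmem : -u ∈ Metric.eball (0 : ℝ) 1 := by
    rwa [Metric.mem_eball, edist_zero_right, enorm_neg, ← ofReal_norm, ENNReal.ofReal_lt_one]
  have h := (Real.one_add_rpow_hasFPowerSeriesOnBall_zero (a := a)).hasSum hmem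
  simp only [binomialSeries_apply, List.ofFn_const, List.prod_replicate, smul_eq_mul,
    ← sub_eq_add_neg, zero_sub] at h
  refine h.congr_fun fun n => ?_
  rw [oneSubRpowCoeff, neg_pow]
  ring

noncomputable def wallisRatio (n : ℕ) : ℝ := oneSubRpowCoeff (-(1/2)) n

@[simp]
theorem wallisRatio_zero : wallisRatio 0 = 1 := oneSubRpowCoeff_zero _

theorem wallisRatio_succ_mul (n : ℕ) :
    wallisRatio (n + 1) * (2 * n + 2) = wallisRatio n * (2 * n + 1) := by
  unfold wallisRatio
  linear_combination 2 * oneSubRpowCoeff_succ_mul (-(1/2)) n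

theorem wallisRatio_pos (n : ℕ) : 0 < wallisRatio n := by
  induction n with
  | zero => simp
  | succ n ih =>
    have h := wallisRatio_succ_mul n
    have : 0 < wallisRatio (n + 1) * (2 * n + 2) := by rw [h]; positivity
    exact pos_of_mul_pos_left this (by positivity)

theorem wallisRatio_le_one (n : ℕ) : wallisRatio n ≤ 1 := by
  induction n with
  | zero => simp
  | succ n ih =>
    have h := wallisRatio_succ_mul n
    nlinarith [wallisRatio_pos n, wallisRatio_pos (n + 1)]

theorem oneSubRpowCoeff_half_mul (n : ℕ) :
    oneSubRpowCoeff (1/2) n * (1 - 2 * n) = wallisRatio n := by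
  induction n with
  | zero => simp
  | succ n ih =>
    have hs := oneSubRpowCoeff_succ_mul (1/2) n
    have hw := wallisRatio_succ_mul n
    have hne : (n : ℝ) + 1 ≠ 0 := by positivity
    apply mul_right_cancel₀ hne
    push_cast
    linear_combination (-1 - 2 * n) * hs - (1/2) * hw + (n + 1/2) * ih

theorem integral_sin_pow_two_mul (n : ℕ) :
    ∫ t in (0)..(π / 2), sin t ^ (2 * n) = π / 2 * wallisRatio n := by
  induction n with
  | zero => simp
  | succ n ih =>
    rw [mul_add, mul_one, integral_sin_pow, ih]
    have hw := wallisRatio_succ_mul n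
    simp only [sin_zero, cos_pi_div_two, mul_zero, sub_zero]
    field_simp
    push_cast
    linear_combination (-π) * hw

theorem hasSum_integral_mul_sin_sq_pow {B : ℕ → ℝ} {f : ℝ → ℝ} {x : ℝ} (hB : ∀ n, |B n| ≤ 1)
    (hx0 : 0 ≤ x) (hx1 : x < 1) (hf : ∀ t, HasSum (fun n => B n * (x * sin t ^ 2) ^ n) (f t)) :
    HasSum (fun n => π / 2 * (B n * wallisRatio n * x ^ n)) (∫ t in (0)..(π / 2), f t) := by
  have hterm (n : ℕ) : ∫ t in (0)..(π / 2), B n * (x * sin t ^ 2) ^ n =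
      π / 2 * (B n * wallisRatio n * x ^ n) := by
    simp only [mul_pow, ← pow_mul]
    rw [intervalIntegral.integral_const_mul, intervalIntegral.integral_const_mul,
      integral_sin_pow_two_mul]
    ring
  simp only [← hterm]
  refine intervalIntegral.hasSum_integral_of_dominated_convergence (fun n _ => x ^ n)
    (fun n => by fun_prop) (fun n => ae_of_all _ fun t _ => ?_)
    (ae_of_all _ fun _ _ => summable_geometric_of_lt_one hx0 hx1)
    intervalIntegrable_const (ae_of_all _ fun t _ => hf t)
  rw [norm_mul, norm_pow, Real.norm_eq_abs, Real.norm_eq_abs,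
    abs_of_nonneg (by positivity : 0 ≤ x * sin t ^ 2)]
  calc |B n| * (x * sin t ^ 2) ^ n ≤ 1 * x ^ n := by
        gcongr
        · exact hB n
        · exact mul_le_of_le_one_right hx0 (sin_sq_le_one t)
  _ = x ^ n := one_mul _

theorem abs_mul_sin_sq_lt_one {x : ℝ} (hx0 : 0 ≤ x) (hx1 : x < 1) (t : ℝ) :
    |x * sin t ^ 2| < 1 := by
  rw [abs_of_nonneg (by positivity)]
  exact (mul_le_of_le_one_right hx0 (sin_sq_le_one t)).trans_lt hx1

noncomputable def kCoeff (n : ℕ) : ℝ := wallisRatio n ^ 2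

noncomputable def eCoeff (n : ℕ) : ℝ := oneSubRpowCoeff (1/2) n * wallisRatio n

theorem abs_oneSubRpowCoeff_half_le_one (n : ℕ) : |oneSubRpowCoeff (1/2) n| ≤ 1 := by
  have h := oneSubRpowCoeff_half_mul n
  have h1 : 1 ≤ |1 - 2 * (n : ℝ)| := by
    rcases n with _ | n
    · simp
    · rw [abs_of_neg (by push_cast; linarith)]
      push_cast
      linarith
  have := congrArg abs h
  rw [abs_mul, abs_of_pos (wallisRatio_pos n)] at this
  nlinarith [wallisRatio_le_one n, abs_nonneg (oneSubRpowCoeff (1/2) n)]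

theorem abs_wallisRatio_le_one (n : ℕ) : |wallisRatio n| ≤ 1 := by
  rw [abs_of_pos (wallisRatio_pos n)]
  exact wallisRatio_le_one n

theorem abs_kCoeff_le_one (n : ℕ) : |kCoeff n| ≤ 1 := by
  rw [kCoeff, abs_pow]
  exact pow_le_one₀ (abs_nonneg _) (abs_wallisRatio_le_one n)

theorem abs_eCoeff_le_one (n : ℕ) : |eCoeff n| ≤ 1 := by
  rw [eCoeff, abs_mul, abs_of_pos (wallisRatio_pos n)]
  exact mul_le_one₀ (abs_oneSubRpowCoeff_half_le_one n) (wallisRatio_pos n).le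
    (wallisRatio_le_one n)

@[simp] theorem kCoeff_zero : kCoeff 0 = 1 := by simp [kCoeff]

@[simp] theorem eCoeff_zero : eCoeff 0 = 1 := by simp [eCoeff]

theorem eCoeff_mul (n : ℕ) : eCoeff n * (1 - 2 * n) = kCoeff n := by
  rw [eCoeff, kCoeff, mul_right_comm, oneSubRpowCoeff_half_mul, sq]

theorem eCoeff_succ (n : ℕ) :
    eCoeff (n + 1) = (2 * n + 3) * kCoeff (n + 1) - (2 * n + 1) * kCoeff n := by
  have he := eCoeff_mul (n + 1)
  have hw := wallisRatio_succ_mul n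
  have hne : (2 * n + 1 : ℝ) ≠ 0 := by positivity
  apply mul_right_cancel₀ hne
  push_cast at he
  simp only [kCoeff] at he ⊢
  linear_combination -he - (wallisRatio (n + 1) * (2 * n + 2) + wallisRatio n * (2 * n + 1)) * hw

noncomputable def kSubECoeff (n : ℕ) : ℝ := kCoeff n - eCoeff n

@[simp] theorem kSubECoeff_zero : kSubECoeff 0 = 0 := by simp [kSubECoeff]

theorem kSubECoeff_pos {n : ℕ} (hn : n ≠ 0) : 0 < kSubECoeff n := by
  have hs : oneSubRpowCoeff (1/2) n < 0 := by
    have h := oneSubRpowCoeff_half_mul n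
    have hn1 : (1 : ℝ) ≤ n := by exact_mod_cast Nat.one_le_iff_ne_zero.2 hn
    nlinarith [wallisRatio_pos n]
  have hw := wallisRatio_pos n
  rw [kSubECoeff, kCoeff, eCoeff]
  nlinarith

theorem kSubECoeff_nonneg (n : ℕ) : 0 ≤ kSubECoeff n := by
  rcases eq_or_ne n 0 with rfl | hn
  · simp
  · exact (kSubECoeff_pos hn).le

theorem abs_kSubECoeff_le_two (n : ℕ) : |kSubECoeff n| ≤ 2 :=
  (abs_sub _ _).trans (by linarith [abs_kCoeff_le_one n, abs_eCoeff_le_one n])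

theorem kSubECoeff_one : kSubECoeff 1 = 1 / 2 := by
  have hw : wallisRatio 1 = 1 / 2 := by
    have h := wallisRatio_succ_mul 0
    norm_num at h
    linarith
  have hs : oneSubRpowCoeff (1/2) 1 = -(1 / 2) := by
    have h := oneSubRpowCoeff_half_mul 1
    norm_num [hw] at h
    linarith
  simp only [kSubECoeff, kCoeff, eCoeff, hw, hs]
  norm_num

section CauchySquare

open Finset

noncomputable def kSubESqCoeff (n : ℕ) : ℝ :=
  ∑ p ∈ antidiagonal n, kSubECoeff p.1 * kSubECoeff p.2

theorem kSubESqCoeff_nonneg (n : ℕ) : 0 ≤ kSubESqCoeff n :=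
  sum_nonneg fun _ _ => mul_nonneg (kSubECoeff_nonneg _) (kSubECoeff_nonneg _)

theorem kSubESqCoeff_le (n : ℕ) : kSubESqCoeff n ≤ 4 * (n + 1) := by
  calc kSubESqCoeff n ≤ ∑ _p ∈ antidiagonal n, (2 * 2 : ℝ) :=
        sum_le_sum fun _ _ => mul_le_mul ((le_abs_self _).trans (abs_kSubECoeff_le_two _))
          ((le_abs_self _).trans (abs_kSubECoeff_le_two _)) (kSubECoeff_nonneg _) zero_le_two
  _ = 4 * (n + 1) := by
    rw [sum_const, Nat.card_antidiagonal, nsmul_eq_mul]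
    push_cast
    ring

@[simp] theorem kSubESqCoeff_zero : kSubESqCoeff 0 = 0 := by simp [kSubESqCoeff]

theorem kSubESqCoeff_eq_sum_range (n : ℕ) :
    kSubESqCoeff n = ∑ k ∈ range (n + 1), kSubECoeff k * kSubECoeff (n - k) :=
  Nat.sum_antidiagonal_eq_sum_range_succ_mk _ n

@[simp] theorem kSubESqCoeff_one : kSubESqCoeff 1 = 0 := by
  simp [kSubESqCoeff_eq_sum_range, sum_range_succ]

theorem kSubESqCoeff_two : kSubESqCoeff 2 = 1 / 4 := by
  norm_num [kSubESqCoeff_eq_sum_range, sum_range_succ, kSubECoeff_one]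

theorem kSubESqCoeff_three_pos : 0 < kSubESqCoeff 3 := by
  have h2 := kSubECoeff_pos (n := 2) (by norm_num)
  norm_num [kSubESqCoeff_eq_sum_range, sum_range_succ, kSubECoeff_one]
  positivity

end CauchySquare

noncomputable def mCoeff (n : ℕ) : ℝ := kSubESqCoeff n / n

theorem mCoeff_nonneg (n : ℕ) : 0 ≤ mCoeff n :=
  div_nonneg (kSubESqCoeff_nonneg n) n.cast_nonneg

theorem mCoeff_le_eight (n : ℕ) : mCoeff n ≤ 8 := by
  rcases eq_or_ne n 0 with rfl | hn
  · simp [mCoeff]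
  have hn1 : (1 : ℝ) ≤ n := by exact_mod_cast Nat.one_le_iff_ne_zero.2 hn
  rw [mCoeff, div_le_iff₀ (by positivity)]
  linarith [kSubESqCoeff_le n]

theorem abs_mCoeff_le_eight (n : ℕ) : |mCoeff n| ≤ 8 := by
  rw [abs_of_nonneg (mCoeff_nonneg n)]
  exact mCoeff_le_eight n

theorem natCast_mul_mCoeff (n : ℕ) : n * mCoeff n = kSubESqCoeff n := by
  rcases eq_or_ne n 0 with rfl | hn
  · simp
  · exact mul_div_cancel₀ _ (Nat.cast_ne_zero.2 hn)

@[simp] theorem mCoeff_zero : mCoeff 0 = 0 := by simp [mCoeff]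

theorem mCoeff_one : mCoeff 1 = 0 := by simp [mCoeff]

noncomputable def kSeries (x : ℝ) : ℝ := ∑' n, kCoeff n * x ^ n

noncomputable def eSeries (x : ℝ) : ℝ := ∑' n, eCoeff n * x ^ n

noncomputable def mSeries (x : ℝ) : ℝ := ∑' n, mCoeff n * x ^ n

theorem K_eq_mul_kSeries {x : ℝ} (hx0 : 0 ≤ x) (hx1 : x < 1) : K x = π / 2 * kSeries x := by
  rw [kSeries, ← tsum_mul_left]
  refine ((hasSum_integral_mul_sin_sq_pow abs_wallisRatio_le_one hx0 hx1 fun t =>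
    hasSum_oneSubRpowCoeff_mul_pow _ (abs_mul_sin_sq_lt_one hx0 hx1 t)).tsum_eq.symm.trans
      (tsum_congr fun n => ?_))
  rw [kCoeff, sq]

theorem E_eq_mul_eSeries {x : ℝ} (hx0 : 0 ≤ x) (hx1 : x < 1) : E x = π / 2 * eSeries x := by
  rw [eSeries, ← tsum_mul_left]
  exact (hasSum_integral_mul_sin_sq_pow abs_oneSubRpowCoeff_half_le_one hx0 hx1 fun t =>
    hasSum_oneSubRpowCoeff_mul_pow _ (abs_mul_sin_sq_lt_one hx0 hx1 t)).tsum_eq.symm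

section SeriesIdentities

variable {x : ℝ}

theorem two_mul_mul_tsum_eCoeff (hx : |x| < 1) :
    2 * x * ∑' n, (n + 1) * eCoeff (n + 1) * x ^ n = eSeries x - kSeries x := by
  have hs := summable_natCast_mul_mul_pow_of_abs_le_const abs_eCoeff_le_one hx
  rw [mul_assoc, mul_tsum_succ_mul_pow hs, eSeries, kSeries, ← tsum_mul_left,
    ← (summable_mul_pow_of_abs_le_const abs_eCoeff_le_one hx).tsum_sub
      (summable_mul_pow_of_abs_le_const abs_kCoeff_le_one hx)]
  exact tsum_congr fun n => by linear_combination (-x ^ n) * eCoeff_mul n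

theorem two_mul_mul_one_sub_mul_tsum_kCoeff (hx : |x| < 1) :
    2 * x * (1 - x) * ∑' n, (n + 1) * kCoeff (n + 1) * x ^ n = eSeries x - (1 - x) * kSeries x := by
  set l : ℕ → ℝ := fun n => (2 * n + 1) * kCoeff n
  have hl (n : ℕ) : |l n| ≤ 2 * (n + 1) := by
    rw [abs_mul, abs_of_nonneg (by positivity)]
    nlinarith [abs_kCoeff_le_one n, abs_nonneg (kCoeff n)]
  have hs := summable_natCast_mul_mul_pow_of_abs_le_const abs_kCoeff_le_one hx
  have hsk := summable_mul_pow_of_abs_le_const abs_kCoeff_le_one hx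
  have hL : ∑' n, l n * x ^ n = 2 * x * ∑' n, (n + 1) * kCoeff (n + 1) * x ^ n + kSeries x := by
    rw [mul_assoc, mul_tsum_succ_mul_pow hs, kSeries, ← tsum_mul_left,
      ← (hs.mul_left 2).tsum_add hsk]
    exact tsum_congr fun n => by ring
  have hE : eSeries x = (1 - x) * ∑' n, l n * x ^ n := by
    rw [one_sub_mul_tsum_mul_pow hl hx, eSeries,
      tsum_mul_pow_eq_add_mul_tsum (summable_mul_pow_of_abs_le_const abs_eCoeff_le_one hx)]
    refine congrArg₂ (· + x * ·) (by simp [l]) (tsum_congr fun n => ?_)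
    rw [eCoeff_succ]
    simp only [l]
    push_cast
    ring
  rw [hE, hL]
  ring

end SeriesIdentities

theorem mul_tsum_mCoeff {x : ℝ} (hx : |x| < 1) :
    x * ∑' n, (n + 1) * mCoeff (n + 1) * x ^ n = (kSeries x - eSeries x) ^ 2 := by
  have hd := summable_mul_pow_of_abs_le_const abs_kSubECoeff_le_two hx
  have hdn : Summable fun n => ‖kSubECoeff n * x ^ n‖ := summable_norm_iff.2 hd
  have hdiff : kSeries x - eSeries x = ∑' n, kSubECoeff n * x ^ n := by
    rw [kSeries, eSeries, ← (summable_mul_pow_of_abs_le_const abs_kCoeff_le_one hx).tsum_sub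
      (summable_mul_pow_of_abs_le_const abs_eCoeff_le_one hx)]
    exact tsum_congr fun n => by rw [kSubECoeff]; ring
  rw [mul_tsum_succ_mul_pow (summable_natCast_mul_mul_pow_of_abs_le_const abs_mCoeff_le_eight hx),
    hdiff, sq, tsum_mul_tsum_eq_tsum_sum_antidiagonal_of_summable_norm hdn hdn]
  refine tsum_congr fun n => ?_
  rw [natCast_mul_mCoeff, kSubESqCoeff, Finset.sum_mul]
  refine Finset.sum_congr rfl fun p hp => ?_
  rw [← Finset.HasAntidiagonal.mem_antidiagonal.1 hp, pow_add]
  ring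

noncomputable def seriesDefect (x : ℝ) : ℝ :=
  eSeries x ^ 2 - (1 - x) * kSeries x ^ 2 - mSeries x

theorem exists_hasDerivAt_seriesDefect {x : ℝ} (hx : |x| < 1) :
    ∃ d, HasDerivAt seriesDefect d x ∧ x * d = 0 := by
  have hK : HasDerivAt kSeries _ x := hasDerivAt_tsum_mul_pow abs_kCoeff_le_one hx
  have hE : HasDerivAt eSeries _ x := hasDerivAt_tsum_mul_pow abs_eCoeff_le_one hx
  have hM : HasDerivAt mSeries _ x := hasDerivAt_tsum_mul_pow abs_mCoeff_le_eight hx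
  have hKE := two_mul_mul_one_sub_mul_tsum_kCoeff hx
  have hEK := two_mul_mul_tsum_eCoeff hx
  have hMM := mul_tsum_mCoeff hx
  refine ⟨_, ((hE.pow 2).sub (((hasDerivAt_id x).const_sub 1).mul (hK.pow 2))).sub hM, ?_⟩
  simp only [Nat.cast_ofNat, Pi.pow_apply, id_eq]
  linear_combination eSeries x * hEK - kSeries x * hKE - hMM

theorem seriesDefect_zero : seriesDefect 0 = 0 := by
  simp [seriesDefect, kSeries, eSeries, mSeries, tsum_mul_zero_pow]

theorem seriesDefect_eq_zero {x : ℝ} (hx0 : 0 ≤ x) (hx1 : x < 1) : seriesDefect x = 0 := by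
  rcases hx0.eq_or_lt with rfl | hx0
  · exact seriesDefect_zero
  have habs {y : ℝ} (hy : y ∈ Icc 0 x) : |y| < 1 := by
    rw [abs_of_nonneg hy.1]; exact hy.2.trans_lt hx1
  choose! d hd hxd using fun y (hy : y ∈ Icc 0 x) => exists_hasDerivAt_seriesDefect (habs hy)
  obtain ⟨c, hc, hslope⟩ := exists_hasDerivAt_eq_slope seriesDefect d hx0
    (fun y hy => (hd y hy).continuousAt.continuousWithinAt)
    (fun y hy => hd y (Ioo_subset_Icc_self hy))
  have hdc : d c = 0 := (mul_eq_zero.1 (hxd c (Ioo_subset_Icc_self hc))).resolve_left hc.1.ne'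
  rw [hdc, seriesDefect_zero, sub_zero, sub_zero, eq_comm, div_eq_zero_iff] at hslope
  exact hslope.resolve_right hx0.ne'

noncomputable def ratioCoeff (n : ℕ) : ℝ := (π / 2) ^ 2 * mCoeff (n + 2)

theorem ratioCoeff_nonneg (n : ℕ) : 0 ≤ ratioCoeff n :=
  mul_nonneg (sq_nonneg _) (mCoeff_nonneg _)

theorem abs_ratioCoeff_le (n : ℕ) : |ratioCoeff n| ≤ (π / 2) ^ 2 * 8 := by
  rw [abs_of_nonneg (ratioCoeff_nonneg n)]
  exact mul_le_mul_of_nonneg_left (mCoeff_le_eight _) (sq_nonneg _)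

theorem ratioCoeff_zero : ratioCoeff 0 = π ^ 2 / 32 := by
  rw [ratioCoeff, mCoeff, kSubESqCoeff_two]
  push_cast
  ring

theorem ratioCoeff_one_pos : 0 < ratioCoeff 1 :=
  mul_pos (by positivity) (div_pos kSubESqCoeff_three_pos (by norm_num))

theorem ratio_eq_tsum {x : ℝ} (hx0 : 0 < x) (hx1 : x < 1) :
    (E x ^ 2 - (1 - x) * K x ^ 2) / x ^ 2 = ∑' n, ratioCoeff n * x ^ n := by
  have hx : |x| < 1 := by rwa [abs_of_pos hx0]
  have hM : mSeries x = x ^ 2 * ∑' n, mCoeff (n + 2) * x ^ n := by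
    have hs := summable_mul_pow_of_abs_le_const abs_mCoeff_le_eight hx
    have hs' : Summable fun n => mCoeff (n + 1) * x ^ n :=
      summable_mul_pow_of_abs_le_const (fun n => abs_mCoeff_le_eight (n + 1)) hx
    rw [mSeries, tsum_mul_pow_eq_add_mul_tsum hs, tsum_mul_pow_eq_add_mul_tsum hs']
    simp only [zero_add, mCoeff_zero, mCoeff_one]
    ring
  have hdefect := seriesDefect_eq_zero hx0.le hx1
  rw [seriesDefect, sub_eq_zero] at hdefect
  simp only [ratioCoeff, mul_assoc, tsum_mul_left]
  rw [K_eq_mul_kSeries hx0.le hx1, E_eq_mul_eSeries hx0.le hx1, div_eq_iff (by positivity)]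
  linear_combination (π / 2) ^ 2 * hdefect + (π / 2) ^ 2 * hM

theorem continuous_E : Continuous E :=
  intervalIntegral.continuous_parametric_intervalIntegral_of_continuous
    (f := fun x t => (1 - x * sin t ^ 2) ^ ((1/2) : ℝ))
    ((Real.continuous_rpow_const (by norm_num)).comp (by fun_prop)) continuous_const

theorem E_one : E 1 = 1 := by
  have hcos : EqOn (fun t => (1 - 1 * sin t ^ 2) ^ ((1/2) : ℝ)) cos (uIcc 0 (π / 2)) := by
    intro t ht
    rw [uIcc_of_le (by positivity)] at ht
    change (1 - 1 * sin t ^ 2) ^ ((1/2) : ℝ) = cos t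
    rw [one_mul, ← cos_sq', ← sqrt_eq_rpow,
      sqrt_sq (cos_nonneg_of_mem_Icc ⟨by linarith [ht.1, pi_pos], ht.2⟩)]
  rw [E, intervalIntegral.integral_congr hcos, integral_cos]
  simp

theorem tendsto_sqrt_one_sub_mul_K : Tendsto (fun x => √(1 - x) * K x) (𝓝[<] 1) (𝓝 0) := by
  have hK : ∀ᶠ x in 𝓝[<] 1,
      √(1 - x) * K x = ∫ t in (0)..(π / 2), √(1 - x) / √(1 - x * sin t ^ 2) := by
    filter_upwards [Ioo_mem_nhdsLT zero_lt_one] with x hx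
    rw [K, ← intervalIntegral.integral_const_mul]
    refine intervalIntegral.integral_congr fun t _ => ?_
    have hpos : 0 < 1 - x * sin t ^ 2 :=
      sub_pos.2 ((le_abs_self _).trans_lt (abs_mul_sin_sq_lt_one hx.1.le hx.2 t))
    rw [rpow_neg hpos.le, ← sqrt_eq_rpow, div_eq_mul_inv]
  have hDCT : Tendsto (fun x => ∫ t in (0)..(π / 2), √(1 - x) / √(1 - x * sin t ^ 2)) (𝓝[<] 1)
      (𝓝 (∫ t in (0)..(π / 2), (0 : ℝ))) := by
    refine intervalIntegral.tendsto_integral_filter_of_dominated_convergence (fun _ => 1)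
      (Eventually.of_forall fun x => ?_) ?_ intervalIntegrable_const ?_
    · exact (by fun_prop : Measurable fun t => √(1 - x) / √(1 - x * sin t ^ 2)).aestronglyMeasurable
    · filter_upwards [Ioo_mem_nhdsLT zero_lt_one] with x hx
      refine ae_of_all _ fun t _ => ?_
      rw [Real.norm_of_nonneg (by positivity)]
      refine div_le_one_of_le₀ (sqrt_le_sqrt ?_) (sqrt_nonneg _)
      nlinarith [sin_sq_le_one t, hx.1]
    · filter_upwards [Measure.ae_ne volume (π / 2)] with t ht hmem
      rw [uIoc_of_le (by positivity)] at hmem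
      have hcos : 0 < cos t :=
        cos_pos_of_mem_Ioo ⟨by linarith [hmem.1, pi_pos], lt_of_le_of_ne hmem.2 ht⟩
      have hne : √(1 - 1 * sin t ^ 2) ≠ 0 := by
        rw [one_mul, ← cos_sq', sqrt_sq hcos.le]; exact hcos.ne'
      have h := ((by fun_prop : Continuous fun x : ℝ => √(1 - x)).tendsto 1).div
        ((by fun_prop : Continuous fun x : ℝ => √(1 - x * sin t ^ 2)).tendsto 1) hne
      rw [sub_self, sqrt_zero, zero_div] at h
      exact h.mono_left nhdsWithin_le_nhds
  rw [intervalIntegral.integral_zero] at hDCT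
  exact hDCT.congr' (EventuallyEq.symm hK)

theorem tendsto_ratio_nhdsLT_one :
    Tendsto (fun x : ℝ => (E x ^ 2 - (1 - x) * K x ^ 2) / x ^ 2) (𝓝[<] 1) (𝓝 1) := by
  have hE : Tendsto E (𝓝[<] 1) (𝓝 1) :=
    (continuous_E.tendsto' 1 1 E_one).mono_left nhdsWithin_le_nhds
  have hid : Tendsto (fun x : ℝ => x) (𝓝[<] 1) (𝓝 1) :=
    tendsto_nhdsWithin_of_tendsto_nhds tendsto_id
  have h := ((hE.pow 2).sub (tendsto_sqrt_one_sub_mul_K.pow 2)).div (hid.pow 2) (by norm_num)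
  rw [show ((1 : ℝ) ^ 2 - 0 ^ 2) / 1 ^ 2 = 1 by norm_num] at h
  refine h.congr' ?_
  filter_upwards [self_mem_nhdsWithin] with x hx
  simp only [Pi.div_apply, mul_pow, sq_sqrt (sub_nonneg.2 (le_of_lt hx))]

theorem stmt1 :
    StrictMonoOn (fun x : ℝ => (E x ^ 2 - (1 - x) * K x ^ 2) / x ^ 2) (Ioo 0 1) ∧
    Tendsto (fun x : ℝ => (E x ^ 2 - (1 - x) * K x ^ 2) / x ^ 2)
      (nhdsWithin 0 (Ioo 0 1)) (nhds (π ^ 2 / 32)) ∧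
    Tendsto (fun x : ℝ => (E x ^ 2 - (1 - x) * K x ^ 2) / x ^ 2)
      (nhdsWithin 1 (Ioo 0 1)) (nhds 1) := by
  refine ⟨?_, ?_, tendsto_ratio_nhdsLT_one.mono_left (nhdsWithin_mono _ Ioo_subset_Iio_self)⟩
  · exact ((strictMonoOn_tsum_mul_pow abs_ratioCoeff_le ratioCoeff_nonneg one_ne_zero
      ratioCoeff_one_pos).mono Ioo_subset_Ico_self).congr fun x hx => (ratio_eq_tsum hx.1 hx.2).symm
  · rw [← ratioCoeff_zero]
    exact ((tendsto_tsum_mul_pow_nhds_zero abs_ratioCoeff_le).mono_left nhdsWithin_le_nhds).congr'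
      (eventually_nhdsWithin_of_forall fun x hx => (ratio_eq_tsum hx.1 hx.2).symm)
end
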